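/- arXiv:0901.2778 — 5 statements merged into one kernel-verified Lean document; each statement's English description precedes it below -/
import Mathlib

section
/- With K, A, Λ, the basis b_1,…,b_N, the dual family b*_1,…,b*_N, and the generalized Jacobian J := Σ_{i=1}^N b_i·b*_i as in the context: for every h ∈ A, Tr(h) = Λ(h·J). Equivalently, the trace functional on A equals J·Λ. -/
namespace Module.Basis

variable {R A ι : Type*} [CommSemiring R] [Semiring A] [Algebra R A] [DecidableEq ι]
  (b : Basis ι R A) (Λ : A →ₗ[R] R) {bs : ι → A}

theorem repr_apply_eq_apply_mul_of_dual (hdual : ∀ i j, Λ (b i * bs j) = if i = j then 1 else 0)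
    (a : A) (j : ι) : b.repr a j = Λ (a * bs j) := by
  have hcoord : b.coord j = Λ ∘ₗ LinearMap.mulRight R (bs j) :=
    b.ext fun i => by simp [hdual, Finsupp.single_apply]
  exact LinearMap.congr_fun hcoord a

/-- The diagonal entry of `a ↦ h * a` at `b i` is `Λ (h * b i * bs i)`. -/
theorem trace_mulLeft_eq_apply_mul_sum_of_dual [Fintype ι]
    (hdual : ∀ i j, Λ (b i * bs j) = if i = j then 1 else 0) (h : A) :
    LinearMap.trace R A (LinearMap.mulLeft R h) = Λ (h * ∑ i, b i * bs i) := by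
  rw [LinearMap.trace_eq_matrix_trace R b, Matrix.trace, Finset.mul_sum, map_sum]
  refine Finset.sum_congr rfl fun i _ => ?_
  rw [Matrix.diag_apply, LinearMap.toMatrix_apply, LinearMap.mulLeft_apply, ← mul_assoc,
    b.repr_apply_eq_apply_mul_of_dual Λ hdual]

end Module.Basis

theorem statement7_general {K : Type*} [Field K] {A : Type*} [CommRing A] [Algebra K A] {N : ℕ}
    (b : Module.Basis (Fin N) K A) (Λ : A →ₗ[K] K) (bs : Fin N → A)
    (hdual : ∀ i j, Λ (b i * bs j) = if i = j then 1 else 0)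
    (J : A) (hJ : J = ∑ i, b i * bs i) :
    ∀ h : A, LinearMap.trace K A (LinearMap.mulLeft K h) = Λ (h * J) := by
  intro h
  rw [hJ]
  exact b.trace_mulLeft_eq_apply_mul_sum_of_dual Λ hdual h

theorem statement7 {K : Type*} [Field K] {A : Type*} [CommRing A] [Algebra K A]
    [FiniteDimensional K A] {N : ℕ} (hN : Module.finrank K A = N)
    (b : Module.Basis (Fin N) K A) (Λ : A →ₗ[K] K) (bs : Fin N → A)
    (hdual : ∀ i j, Λ (b i * bs j) = if i = j then 1 else 0)
    (J : A) (hJ : J = ∑ i, b i * bs i) :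
    ∀ h : A, LinearMap.trace K A (LinearMap.mulLeft K h) = Λ (h * J) :=
  statement7_general b Λ bs hdual J hJ
end

section
/- With K, A, Λ, the basis b_1,…,b_N, the dual family b*_1,…,b*_N, and J := Σ_{i=1}^N b_i·b*_i as in the context: let M_J be the N×N matrix whose (i,j) entry is the coefficient of b_j in the expansion of J·b_i in the basis b_1,…,b_N (i.e., M_J is the transpose of the matrix of the multiplication-by-J endomorphism in this basis), let 𝔐 be the N×N moment matrix with (i,j) entry Λ(b_i·b_j), and let T be the N×N matrix of traces with (i,j) entry Tr(b_i·b_j). Then M_J · 𝔐 = T. -/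
/-!
Pairing the dual family with `Λ` recovers coordinates: `Λ (a * b*ⱼ)` is the `j`-th coordinate of
`a`. Hence `Tr h = ∑ₖ Λ (h bₖ b*ₖ) = Λ (h J)`, while expanding `J bᵢ` in the basis shows that the
`(i, j)` entry of `M_J 𝔐` is `Λ (J bᵢ bⱼ)`; commutativity identifies the two.
-/

theorem Module.Basis.sum_repr_mul_apply {R M ι : Type*} [CommSemiring R] [AddCommMonoid M]
    [Module R M] [Fintype ι] (b : Module.Basis ι R M) (f : M →ₗ[R] R) (x : M) :
    ∑ k, b.repr x k * f (b k) = f x := by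
  conv_rhs => rw [← b.sum_repr x]
  simp only [map_sum, map_smul, smul_eq_mul]

section DualFamily

variable {K A ι : Type*} [CommRing K] [Ring A] [Algebra K A] [Fintype ι] [DecidableEq ι]
  (b : Module.Basis ι K A) (Λ : A →ₗ[K] K) {bs : ι → A}

theorem apply_mul_dual_eq_repr (hdual : ∀ i j, Λ (b i * bs j) = if i = j then 1 else 0)
    (a : A) (j : ι) : Λ (a * bs j) = b.repr a j := by
  simpa [hdual] using (b.sum_repr_mul_apply (Λ ∘ₗ LinearMap.mulRight K (bs j)) a).symm

theorem trace_mulLeft_eq_apply_mul_sum_mul_dual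
    (hdual : ∀ i j, Λ (b i * bs j) = if i = j then 1 else 0) (h : A) :
    LinearMap.trace K A (LinearMap.mulLeft K h) = Λ (h * ∑ k, b k * bs k) := by
  rw [LinearMap.trace_eq_matrix_trace K b, Matrix.trace, Finset.mul_sum, map_sum]
  refine Finset.sum_congr rfl fun k _ => ?_
  rw [← mul_assoc, apply_mul_dual_eq_repr b Λ hdual, Matrix.diag, LinearMap.toMatrix_apply, LinearMap.mulLeft_apply]

end DualFamily

theorem statement8_general {K : Type*} [Field K] {A : Type*} [CommRing A] [Algebra K A] {N : ℕ}
    (b : Module.Basis (Fin N) K A) (Λ : A →ₗ[K] K) (bs : Fin N → A)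
    (hdual : ∀ i j, Λ (b i * bs j) = if i = j then 1 else 0)
    (J : A) (hJ : J = ∑ i, b i * bs i)
    (MJ : Matrix (Fin N) (Fin N) K) (hMJ : ∀ i j, MJ i j = b.repr (J * b i) j)
    (G : Matrix (Fin N) (Fin N) K) (hG : ∀ i j, G i j = Λ (b i * b j))
    (T : Matrix (Fin N) (Fin N) K)
    (hT : ∀ i j, T i j = LinearMap.trace K A (LinearMap.mulLeft K (b i * b j))) :
    MJ * G = T := by
  ext i j
  calc (MJ * G) i j = ∑ k, b.repr (J * b i) k * Λ (b k * b j) := by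
        simp only [Matrix.mul_apply, hMJ, hG]
    _ = Λ (J * b i * b j) := b.sum_repr_mul_apply (Λ ∘ₗ LinearMap.mulRight K (b j)) _
    _ = Λ (b i * b j * J) := by rw [mul_assoc, mul_comm]
    _ = T i j := by rw [hT, trace_mulLeft_eq_apply_mul_sum_mul_dual b Λ hdual, hJ]

theorem statement8 {K : Type*} [Field K] {A : Type*} [CommRing A] [Algebra K A]
    [FiniteDimensional K A] {N : ℕ} (hN : Module.finrank K A = N)
    (b : Module.Basis (Fin N) K A) (Λ : A →ₗ[K] K) (bs : Fin N → A)
    (hdual : ∀ i j, Λ (b i * bs j) = if i = j then 1 else 0)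
    (J : A) (hJ : J = ∑ i, b i * bs i)
    (MJ : Matrix (Fin N) (Fin N) K) (hMJ : ∀ i j, MJ i j = b.repr (J * b i) j)
    (G : Matrix (Fin N) (Fin N) K) (hG : ∀ i j, G i j = Λ (b i * b j))
    (T : Matrix (Fin N) (Fin N) K)
    (hT : ∀ i j, T i j = LinearMap.trace K A (LinearMap.mulLeft K (b i * b j))) :
    MJ * G = T :=
  statement8_general b Λ bs hdual J hJ MJ hMJ G hG T hT
end

section
/- Let K be an algebraically closed field and A a finite-dimensional commutative unital K-algebra. Let Λ : A → K be a K-linear functional such that the bilinear form (a,b) ↦ Λ(a·b) has maximal rank among all K-linear functionals on A, i.e., dim_K(A/R(Λ')) ≤ dim_K(A/R(Λ)) for every K-linear functional Λ' : A → K. Then R(Λ) ⊆ Rad(A), where Rad(A) denotes the nilradical (equivalently, the Jacobson radical) of A. -/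
/-- `R(Λ) = {a ∈ A : Λ(a·b) = 0 for all b}`, as an ideal of `A`. -/
def RIdeal {K A : Type*} [Field K] [CommRing A] [Algebra K A]
    (Λ : A →ₗ[K] K) : Ideal A where
  carrier := { a : A | ∀ b : A, Λ (a * b) = 0 }
  zero_mem' := by intro b; simp
  add_mem' := by
    intro x y hx hy b
    have : (x + y) * b = x * b + y * b := by ring
    rw [this, map_add, hx b, hy b, add_zero]
  smul_mem' := by
    intro c a ha b
    have : c • a * b = a * (c * b) := by
      rw [smul_eq_mul]; ring
    rw [this]; exact ha (c * b)

/-!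
If `a ∈ R(Λ)` were not nilpotent, some prime `p` of `A` would miss it. Since `A ⧸ p` is a
domain integral over the algebraically closed field `K`, it is `K` itself, which gives a
character `φ : A → K` with `φ a ≠ 0`. For `x ∈ R(Λ + φ)` one gets `φ x φ a = (Λ + φ)(x a) = 0`,
so `φ x = 0` and `x ∈ R(Λ)`; and `a ∉ R(Λ + φ)`. Thus `R(Λ + φ) ⊊ R(Λ)`, so `Λ + φ` has larger
rank than `Λ`.
-/

open Module

theorem IsAlgClosed.exists_algHom_ker_eq {K A : Type*} [Field K] [IsAlgClosed K] [CommRing A]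
    [Algebra K A] [Algebra.IsIntegral K A] (p : Ideal A) [p.IsPrime] :
    ∃ φ : A →ₐ[K] K, RingHom.ker φ = p := by
  have hbij : Function.Bijective (algebraMap K (A ⧸ p)) :=
    ⟨(algebraMap K (A ⧸ p)).injective, IsAlgClosed.algebraMap_bijective_of_isIntegral.2⟩
  let ψ : (A ⧸ p) ≃ₐ[K] K := (AlgEquiv.ofBijective (Algebra.ofId K (A ⧸ p)) hbij).symm
  refine ⟨ψ.toAlgHom.comp (Ideal.Quotient.mkₐ K p), ?_⟩
  ext x
  simp [map_eq_zero_iff _ ψ.injective, Ideal.Quotient.eq_zero_iff_mem]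

theorem IsAlgClosed.exists_algHom_apply_ne_zero {K A : Type*} [Field K] [IsAlgClosed K]
    [CommRing A] [Algebra K A] [Algebra.IsIntegral K A] {a : A} (ha : a ∉ nilradical A) :
    ∃ φ : A →ₐ[K] K, φ a ≠ 0 := by
  rw [mem_nilradical, nilpotent_iff_mem_prime] at ha
  push Not at ha
  obtain ⟨p, hp, hap⟩ := ha
  obtain ⟨φ, hφ⟩ := exists_algHom_ker_eq (K := K) p
  exact ⟨φ, fun h => hap (hφ ▸ h)⟩

theorem finrank_quotient_lt_of_lt {K A : Type*} [Field K] [CommRing A] [Algebra K A]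
    [FiniteDimensional K A] {I J : Ideal A} (h : I < J) :
    finrank K (A ⧸ J) < finrank K (A ⧸ I) := by
  have hIJ : I.restrictScalars K < J.restrictScalars K := h
  have hlt := Submodule.finrank_lt_finrank_of_lt hIJ
  have hI := (I.restrictScalars K).finrank_quotient_add_finrank
  have hJ := (J.restrictScalars K).finrank_quotient_add_finrank
  rw [(Submodule.Quotient.restrictScalarsEquiv K I).finrank_eq] at hI
  rw [(Submodule.Quotient.restrictScalarsEquiv K J).finrank_eq] at hJ
  omega

theorem RIdeal_add_algHom_lt {K A : Type*} [Field K] [CommRing A] [Algebra K A]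
    {Λ : A →ₗ[K] K} {φ : A →ₐ[K] K} {a : A} (ha : a ∈ RIdeal Λ) (hφa : φ a ≠ 0) :
    RIdeal (Λ + φ.toLinearMap) < RIdeal Λ := by
  have hR : ∀ x ∈ RIdeal (Λ + φ.toLinearMap), ∀ b, Λ (x * b) + φ x * φ b = 0 :=
    fun x hx b => by simpa using hx b
  refine lt_of_le_of_ne (fun x hxΛ' b => ?_) (fun heq => hφa ?_)
  · have hφx : φ x = 0 := by
      have := hR x hxΛ' a
      rwa [mul_comm x a, ha x, zero_add, mul_eq_zero, or_iff_left hφa] at this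
    simpa [hφx] using hR x hxΛ' b
  · have hΛa : Λ a = 0 := by simpa using ha 1
    simpa [hΛa] using hR a (heq ▸ ha) 1

theorem statement14 {K A : Type*} [Field K] [IsAlgClosed K] [CommRing A] [Algebra K A]
    [FiniteDimensional K A] (Λ : A →ₗ[K] K)
    (hmax : ∀ Λ' : A →ₗ[K] K,
      Module.finrank K (A ⧸ RIdeal Λ') ≤ Module.finrank K (A ⧸ RIdeal Λ)) :
    RIdeal Λ ≤ nilradical A := by
  intro a ha
  by_contra hna
  obtain ⟨φ, hφa⟩ := IsAlgClosed.exists_algHom_apply_ne_zero (K := K) hna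
  exact (hmax _).not_gt (finrank_quotient_lt_of_lt (RIdeal_add_algHom_lt ha hφa))
end

section
/- Let K be a field, A a finite-dimensional commutative unital K-algebra, and N an ideal of A contained in the nilradical of A. Let b_1,…,b_n be a K-basis of A and S ⊆ {1,…,n} a subset such that the images of the elements b_i, i ∈ S, in A/N form a K-basis of A/N. Let T be the n×n matrix of traces with entries T_{ij} = Tr(b_i·b_j). Then the rank of the submatrix (T_{ij})_{i,j ∈ S} equals the rank of T. -/
/-!
The trace of a nilpotent element is nilpotent, hence zero, so the trace form `(x, y) ↦ Tr(x y)`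
only depends on the classes of `x` and `y` modulo `N`. Writing each `b j` modulo `N` in the basis
`(b i)_{i ∈ S}` of `A ⧸ N` with coefficient matrix `C` therefore gives `T = C Tₛ Cᵀ`, where `Tₛ` is
the submatrix on `S`. Since `Tₛ` is a submatrix of `T` and `T` factors through `Tₛ`, the two ranks
agree.
-/

open Matrix

theorem Matrix.rank_submatrix_eq_of_eq_mul_submatrix_mul {R m n m₀ n₀ : Type*} [CommRing R]
    [StrongRankCondition R] [Fintype n] [Fintype m₀] [Fintype n₀] (T : Matrix m n R)
    (r : m₀ → m) (c : n₀ → n) (C : Matrix m m₀ R) (D : Matrix n₀ n R)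
    (h : T = C * T.submatrix r c * D) : (T.submatrix r c).rank = T.rank := by
  refine le_antisymm (rank_submatrix_le T r c) ?_
  calc T.rank = (C * T.submatrix r c * D).rank := by rw [← h]
    _ ≤ (C * T.submatrix r c).rank := rank_mul_le_left _ _
    _ ≤ (T.submatrix r c).rank := rank_mul_le_right _ _

theorem LinearMap.of_apply_sum_smul_eq_mul_mul_transpose {R M m s : Type*} [CommSemiring R]
    [AddCommMonoid M] [Module R M] [Fintype s] (B : M →ₗ[R] M →ₗ[R] R) (w : s → M)
    (C : Matrix m s R) :
    Matrix.of (fun j k => B (∑ i, C j i • w i) (∑ l, C k l • w l)) =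
      C * Matrix.of (fun i l => B (w i) (w l)) * Cᵀ := by
  ext j k
  simp only [Matrix.of_apply, map_sum, map_smul, LinearMap.sum_apply, LinearMap.smul_apply,
    smul_eq_mul, Matrix.mul_apply, Matrix.transpose_apply, Finset.sum_mul, Finset.mul_sum]
  exact Finset.sum_congr rfl fun l _ => Finset.sum_congr rfl fun i _ => by ring

theorem Algebra.trace_eq_zero_of_isNilpotent {K A : Type*} [CommRing K] [IsReduced K] [CommRing A]
    [Algebra K A] {x : A} (hx : IsNilpotent x) : Algebra.trace K A x = 0 :=
  (isNilpotent_trace_of_isNilpotent hx).eq_zero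

theorem Algebra.traceForm_eq_of_sub_mem_nilradical {K A : Type*} [CommRing K] [IsReduced K]
    [CommRing A] [Algebra K A] {x x' y y' : A} (hx : x - x' ∈ nilradical A)
    (hy : y - y' ∈ nilradical A) : Algebra.traceForm K A x y = Algebra.traceForm K A x' y' := by
  have hmem : x * y - x' * y' ∈ nilradical A := by
    rw [show x * y - x' * y' = (x - x') * y + x' * (y - y') by ring]
    exact add_mem (Ideal.mul_mem_right _ _ hx) (Ideal.mul_mem_left _ _ hy)
  rw [Algebra.traceForm_apply, Algebra.traceForm_apply, ← sub_eq_zero, ← map_sub]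
  exact Algebra.trace_eq_zero_of_isNilpotent hmem

theorem Ideal.Quotient.sub_sum_repr_smul_mem {K A s : Type*} [CommRing K] [CommRing A]
    [Algebra K A] [Fintype s] {N : Ideal A} (q : Module.Basis s K (A ⧸ N)) (w : s → A)
    (hq : ∀ i, q i = Ideal.Quotient.mk N (w i)) (x : A) :
    x - ∑ i, q.repr (Ideal.Quotient.mk N x) i • w i ∈ N := by
  rw [← Ideal.Quotient.eq]
  conv_lhs => rw [← q.sum_repr (Ideal.Quotient.mk N x)]
  simp only [hq, ← Ideal.Quotient.mkₐ_eq_mk K, map_sum, map_smul]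

theorem statement16_general {K A : Type*} [Field K] [CommRing A] [Algebra K A]
    {n : ℕ} (b : Module.Basis (Fin n) K A)
    (N : Ideal A) (hN : N ≤ nilradical A)
    (S : Finset (Fin n))
    (hind : LinearIndependent K (fun i : S => Ideal.Quotient.mk N (b i)))
    (hspan : Submodule.span K (Set.range fun i : S => Ideal.Quotient.mk N (b i)) = ⊤)
    (T : Matrix (Fin n) (Fin n) K)
    (hT : ∀ i j, T i j = LinearMap.trace K A (LinearMap.mulLeft K (b i * b j))) :
    (T.submatrix (fun i : S => (i : Fin n)) (fun j : S => (j : Fin n))).rank = T.rank := by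
  let q := Module.Basis.mk hind hspan.ge
  let C : Matrix (Fin n) S K := Matrix.of fun j i => q.repr (Ideal.Quotient.mk N (b j)) i
  have hrepr (j : Fin n) : b j - ∑ i, C j i • b i ∈ nilradical A :=
    hN (Ideal.Quotient.sub_sum_repr_smul_mem q (fun i : S => b i) (Module.Basis.mk_apply _ _) _)
  have hT_traceForm (i j : Fin n) : T i j = Algebra.traceForm K A (b i) (b j) := hT i j
  have hTS : T.submatrix (fun i : S => (i : Fin n)) (fun j : S => (j : Fin n)) =
      Matrix.of fun i l : S => Algebra.traceForm K A (b i) (b l) := by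
    ext i l
    exact hT_traceForm i l
  refine rank_submatrix_eq_of_eq_mul_submatrix_mul T _ _ C Cᵀ ?_
  rw [hTS, ← LinearMap.of_apply_sum_smul_eq_mul_mul_transpose]
  ext j k
  rw [hT_traceForm, Matrix.of_apply]
  exact Algebra.traceForm_eq_of_sub_mem_nilradical (hrepr j) (hrepr k)

theorem statement16 {K A : Type*} [Field K] [CommRing A] [Algebra K A]
    [FiniteDimensional K A] {n : ℕ} (b : Module.Basis (Fin n) K A)
    (N : Ideal A) (hN : N ≤ nilradical A)
    (S : Finset (Fin n))
    (hind : LinearIndependent K (fun i : S => Ideal.Quotient.mk N (b i)))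
    (hspan : Submodule.span K (Set.range fun i : S => Ideal.Quotient.mk N (b i)) = ⊤)
    (T : Matrix (Fin n) (Fin n) K)
    (hT : ∀ i j, T i j = LinearMap.trace K A (LinearMap.mulLeft K (b i * b j))) :
    (T.submatrix (fun i : S => (i : Fin n)) (fun j : S => (j : Fin n))).rank = T.rank :=
  statement16_general b N hN S hind hspan T hT
end

section
/- Let K be a field and f ∈ K[x] of degree d ≥ 1 with coefficients a_0,…,a_d (a_d ≠ 0). Let c_{ij} (0 ≤ i,j ≤ d−1) be the coefficients determined by the identity f(x)f'(y) − f(y)f'(x) = (x−y)·Σ_{i,j=0}^{d−1} c_{ij} x^i y^j in K[x,y]. Then for all 0 ≤ i,j ≤ d−1, c_{ij} = Tr(H_i·H_j); that is, the Bezout matrix B_{f,f'} of f and its derivative f' equals the matrix of traces of f with respect to the Horner basis H_0,…,H_{d−1}. -/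
/-!
Write `α` for the class of `x` in `A = K[x]/(f)`. Since
`f(y) - f(x) = (y - x) · ∑ₜ Hₜ(x) yᵗ`, reducing the Bezout identity modulo `f(x)` and
cancelling `y - α` gives `Hⱼ(α) · f'(α) = ∑ᵢ cᵢⱼ αⁱ`. The functional `λ` reading off the
`α^(d-1)`-coordinate satisfies `λ(αᵏ Hᵢ(α)) = a_d δₖᵢ`, i.e. the `Hᵢ(α) / a_d` are the dual
basis of the `αᵏ` for the pairing `(u, v) ↦ λ(uv)`. Together with `f' = ∑ₜ Hₜ xᵗ` this gives
Euler's formula `a_d · Tr(z) = λ(z f'(α))`, and hence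
`a_d cᵢⱼ = λ(Hᵢ Hⱼ f'(α)) = a_d Tr(Hᵢ Hⱼ)`.
-/

open Polynomial

namespace Polynomial

section Semiring

variable {R : Type*} [Semiring R]

noncomputable def hornerPoly (f : R[X]) (i : ℕ) : R[X] :=
  ∑ t ∈ Finset.range (f.natDegree - i), C (f.coeff (i + 1 + t)) * X ^ t

theorem coeff_hornerPoly (f : R[X]) (i n : ℕ) :
    (hornerPoly f i).coeff n = f.coeff (i + 1 + n) := by
  rw [hornerPoly, finsetSum_coeff]
  simp only [coeff_C_mul_X_pow, Finset.sum_ite_eq, Finset.mem_range]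
  split_ifs with h
  · rfl
  · exact (coeff_eq_zero_of_natDegree_lt (by omega)).symm

theorem hornerPoly_eq_C_add_X_mul (f : R[X]) (i : ℕ) :
    hornerPoly f i = C (f.coeff (i + 1)) + X * hornerPoly f (i + 1) := by
  ext (_ | n)
  · simp [coeff_hornerPoly]
  · simp only [coeff_add, coeff_C_succ, coeff_X_mul, coeff_hornerPoly, zero_add]
    ring_nf

theorem C_add_X_mul_hornerPoly_zero (f : R[X]) : C (f.coeff 0) + X * hornerPoly f 0 = f := by
  ext (_ | n)
  · simp
  · simp only [coeff_add, coeff_C_succ, coeff_X_mul, coeff_hornerPoly, zero_add]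
    ring_nf

theorem natDegree_hornerPoly_le (f : R[X]) (i : ℕ) :
    (hornerPoly f i).natDegree ≤ f.natDegree - (i + 1) :=
  natDegree_le_iff_coeff_eq_zero.mpr fun n hn => by
    rw [coeff_hornerPoly, coeff_eq_zero_of_natDegree_lt]
    omega

theorem coeff_sum_fin_C_mul_X_pow {n : ℕ} (v : Fin n → R) (j : Fin n) :
    (∑ i : Fin n, C (v i) * X ^ (i : ℕ)).coeff j = v j := by
  simp only [finsetSum_coeff, coeff_C_mul_X_pow, Fin.val_inj, Finset.sum_ite_eq, Finset.mem_univ,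
    if_true]

/-- `(f(y) - f(x)) / (y - x) = ∑ₜ Hₜ(x) yᵗ`, with `x` the inner and `y` the outer variable. -/
noncomputable def dividedDifference (f : R[X]) : R[X][X] :=
  ∑ t ∈ Finset.range f.natDegree, C (hornerPoly f t) * X ^ t

theorem coeff_dividedDifference (f : R[X]) (t : ℕ) :
    (dividedDifference f).coeff t = hornerPoly f t := by
  rw [dividedDifference, finsetSum_coeff]
  simp only [coeff_C_mul_X_pow, Finset.sum_ite_eq, Finset.mem_range]
  split_ifs with h
  · rfl
  · ext n
    rw [coeff_hornerPoly, coeff_zero, coeff_eq_zero_of_natDegree_lt (by omega)]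

end Semiring

section CommRing

variable {R : Type*} [CommRing R]

theorem X_pow_mul_hornerPoly (f : R[X]) (i : ℕ) :
    X ^ (i + 1) * hornerPoly f i = f - ∑ t ∈ Finset.range (i + 1), C (f.coeff t) * X ^ t := by
  ext n
  simp only [coeff_X_pow_mul', coeff_hornerPoly, coeff_sub, finsetSum_coeff, coeff_C_mul_X_pow,
    Finset.sum_ite_eq, Finset.mem_range]
  split_ifs with hle hlt
  · omega
  · rw [sub_zero]; congr 1; omega
  · rw [sub_self]
  · omega

theorem map_C_sub_C_eq_mul_dividedDifference (f : R[X]) :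
    f.map C - C f = (X - C X) * dividedDifference f := by
  ext1 (_ | n)
  · rw [sub_mul, coeff_sub, coeff_sub, coeff_map, coeff_C_zero, mul_coeff_zero, coeff_X_zero,
      coeff_C_mul, coeff_dividedDifference]
    linear_combination C_add_X_mul_hornerPoly_zero f
  · rw [sub_mul, coeff_sub, coeff_sub, coeff_map, coeff_C_succ, coeff_X_mul, coeff_C_mul,
      coeff_dividedDifference, coeff_dividedDifference, hornerPoly_eq_C_add_X_mul f n]
    ring

theorem derivative_eq_eval_dividedDifference (f : R[X]) :
    derivative f = (dividedDifference f).eval X := by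
  have h := congrArg (eval X ∘ derivative) (map_C_sub_C_eq_mul_dividedDifference f)
  simpa [derivative_map, eval_map] using h

end CommRing

end Polynomial

namespace AdjoinRoot

theorem mk_coeff_eq_of_bezout {R : Type*} [CommRing R] {f g : R[X]} {Q : R[X][X]}
    (hQ : C f * g.map C - f.map C * C g = (C X - X) * Q) (j : ℕ) :
    mk f (Q.coeff j) = mk f (hornerPoly f j) * mk f g := by
  have hf := congrArg (Polynomial.map (mk f)) (map_C_sub_C_eq_mul_dividedDifference f)
  have hQ' := congrArg (Polynomial.map (mk f)) hQ
  simp only [Polynomial.map_sub, Polynomial.map_mul, Polynomial.map_C, Polynomial.map_X,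
    mk_self, mk_X, C_0, zero_mul, sub_zero, zero_sub] at hf hQ'
  have hcancel : (X - C (root f)) * ((dividedDifference f).map (mk f) * C (mk f g)) =
      (X - C (root f)) * Q.map (mk f) := by
    linear_combination -C (mk f g) * hf - hQ'
  have h := congrArg (coeff · j) ((monic_X_sub_C _).isRegular.left hcancel)
  simp only [coeff_mul_C, coeff_map, coeff_dividedDifference] at h
  exact h.symm

section Field

variable {K : Type*} [Field K] {f : K[X]} (hf : f ≠ 0)

noncomputable def monomialBasis : Module.Basis (Fin f.natDegree) K (AdjoinRoot f) :=
  (powerBasis hf).basis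

theorem monomialBasis_apply (i : Fin f.natDegree) : monomialBasis hf i = root f ^ (i : ℕ) :=
  (powerBasis hf).basis_eq_pow i

theorem mk_sum_C_mul_X_pow (v : Fin f.natDegree → K) :
    mk f (∑ i : Fin f.natDegree, C (v i) * X ^ (i : ℕ)) =
      ∑ i, v i • monomialBasis hf i := by
  rw [map_sum]
  refine Finset.sum_congr rfl fun i _ => ?_
  rw [monomialBasis_apply, map_mul, map_pow, mk_C, mk_X, Algebra.smul_def, AdjoinRoot.algebraMap_eq]

theorem repr_mk_sum_C_mul_X_pow (v : Fin f.natDegree → K) :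
    (monomialBasis hf).repr (mk f (∑ i : Fin f.natDegree, C (v i) * X ^ (i : ℕ))) = v := by
  rw [mk_sum_C_mul_X_pow hf, Module.Basis.repr_sum_self]

theorem repr_mk_of_natDegree_lt {p : K[X]} (hp : p.natDegree < f.natDegree) (i : Fin f.natDegree) :
    (monomialBasis hf).repr (mk f p) i = p.coeff i := by
  conv_lhs => rw [as_sum_range_C_mul_X_pow' p hp,
    ← Fin.sum_univ_eq_sum_range (fun t => C (p.coeff t) * X ^ t), repr_mk_sum_C_mul_X_pow hf]

theorem repr_root_pow_mul_mk_hornerPoly {k i m : Fin f.natDegree}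
    (hm : (m : ℕ) + 1 = f.natDegree) :
    (monomialBasis hf).repr (root f ^ (k : ℕ) * mk f (hornerPoly f i)) m =
      if k = i then f.leadingCoeff else 0 := by
  rcases le_or_gt (k : ℕ) i with hki | hik
  · have hdeg : (X ^ (k : ℕ) * hornerPoly f i).natDegree < f.natDegree :=
      (natDegree_mul_le.trans
        (add_le_add (natDegree_X_pow_le _) (natDegree_hornerPoly_le f i))).trans_lt (by omega)
    rw [← mk_X, ← map_pow, ← map_mul, repr_mk_of_natDegree_lt hf hdeg, coeff_X_pow_mul',
      if_pos (by omega), coeff_hornerPoly]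
    split_ifs with hki'
    · subst hki'
      rw [leadingCoeff]
      congr 1
      omega
    · exact coeff_eq_zero_of_natDegree_lt (by rw [Fin.ext_iff] at hki'; omega)
  · set low := ∑ t ∈ Finset.range (i + 1), C (f.coeff t) * X ^ t
    have hlow : low.natDegree ≤ i := natDegree_sum_le_of_forall_le _ _ fun t ht =>
      (natDegree_C_mul_X_pow_le _ _).trans (Nat.lt_succ_iff.mp (Finset.mem_range.mp ht))
    have hdeg : (X ^ ((k : ℕ) - 1 - i) * low).natDegree < (m : ℕ) :=
      (natDegree_mul_le.trans (add_le_add (natDegree_X_pow_le _) hlow)).trans_lt (by omega)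
    have hred :
        root f ^ (k : ℕ) * mk f (hornerPoly f i) = -mk f (X ^ ((k : ℕ) - 1 - i) * low) := by
      rw [← mk_X, ← map_pow, ← map_mul, ← map_neg, mk_eq_mk]
      refine Dvd.intro_left (X ^ ((k : ℕ) - 1 - i)) ?_
      rw [← pow_sub_mul_pow X (show (i : ℕ) + 1 ≤ k by omega), mul_assoc,
        X_pow_mul_hornerPoly, show (k : ℕ) - (i + 1) = k - 1 - i by omega]
      ring
    rw [hred, map_neg, Finsupp.neg_apply, repr_mk_of_natDegree_lt hf (hdeg.trans (by omega)),
      coeff_eq_zero_of_natDegree_lt hdeg, neg_zero, if_neg (by rw [Fin.ext_iff]; omega)]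

theorem repr_mul_mk_hornerPoly (z : AdjoinRoot f) {i m : Fin f.natDegree}
    (hm : (m : ℕ) + 1 = f.natDegree) :
    (monomialBasis hf).repr (z * mk f (hornerPoly f i)) m =
      f.leadingCoeff * (monomialBasis hf).repr z i := by
  have hcoord : (monomialBasis hf).coord m ∘ₗ LinearMap.mulRight K (mk f (hornerPoly f i)) =
      f.leadingCoeff • (monomialBasis hf).coord i := by
    refine (monomialBasis hf).ext fun k => ?_
    simp only [LinearMap.comp_apply, LinearMap.mulRight_apply, LinearMap.smul_apply,
      Module.Basis.coord_apply, Module.Basis.repr_self, smul_eq_mul]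
    rw [monomialBasis_apply, repr_root_pow_mul_mk_hornerPoly hf hm, Finsupp.single_apply]
    split_ifs <;> simp_all
  simpa using LinearMap.congr_fun hcoord z

theorem mk_derivative :
    mk f (derivative f) = ∑ k : Fin f.natDegree, root f ^ (k : ℕ) * mk f (hornerPoly f k) := by
  rw [derivative_eq_eval_dividedDifference, dividedDifference, eval_finsetSum, map_sum,
    ← Fin.sum_univ_eq_sum_range]
  simp only [eval_mul, eval_C, eval_pow, eval_X, map_mul, map_pow, mk_X, mul_comm]

theorem trace_mulLeft (z : AdjoinRoot f) :
    LinearMap.trace K _ (LinearMap.mulLeft K z) =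
      ∑ k : Fin f.natDegree, (monomialBasis hf).repr (z * root f ^ (k : ℕ)) k := by
  rw [LinearMap.trace_eq_matrix_trace K (monomialBasis hf), Matrix.trace]
  simp only [Matrix.diag_apply, LinearMap.toMatrix_apply, LinearMap.mulLeft_apply,
    monomialBasis_apply]

theorem leadingCoeff_mul_trace_mulLeft (z : AdjoinRoot f) {m : Fin f.natDegree}
    (hm : (m : ℕ) + 1 = f.natDegree) :
    f.leadingCoeff * LinearMap.trace K _ (LinearMap.mulLeft K z) =
      (monomialBasis hf).repr (z * mk f (derivative f)) m := by
  rw [trace_mulLeft hf, mk_derivative, Finset.mul_sum, Finset.mul_sum, map_sum,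
    Finsupp.finsetSum_apply]
  simp only [← mul_assoc, repr_mul_mk_hornerPoly hf _ hm]

theorem repr_mk_coeff_of_bezout_eq_trace {Q : K[X][X]}
    (hQ : C f * (derivative f).map C - f.map C * C (derivative f) = (C X - X) * Q)
    (i j : Fin f.natDegree) :
    (monomialBasis hf).repr (mk f (Q.coeff j)) i =
      LinearMap.trace K _ (LinearMap.mulLeft K (mk f (hornerPoly f i * hornerPoly f j))) := by
  let m : Fin f.natDegree := ⟨f.natDegree - 1, Nat.sub_lt i.pos one_pos⟩
  have hm : (m : ℕ) + 1 = f.natDegree := Nat.sub_add_cancel i.pos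
  refine mul_left_cancel₀ (leadingCoeff_ne_zero.mpr hf) ?_
  rw [leadingCoeff_mul_trace_mulLeft hf _ hm, ← repr_mul_mk_hornerPoly hf _ hm,
    mk_coeff_eq_of_bezout hQ, map_mul (mk f)]
  congr 2
  ring

end Field

end AdjoinRoot

theorem statement17_general {K : Type*} [Field K] {d : ℕ}
    (f : Polynomial K) (hdeg : f.natDegree = d) (hlc : f.coeff d ≠ 0)
    (c : Fin d → Fin d → K)
    (hc : C f * (derivative f).map C - f.map C * C (derivative f)
        = (C X - X) *
          ∑ j : Fin d, C (∑ i : Fin d, C (c i j) * X ^ (i : ℕ)) * X ^ (j : ℕ))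
    (H : Fin d → Polynomial K)
    (hH : ∀ i : Fin d,
      H i = ∑ t ∈ Finset.range (d - (i : ℕ)),
        C (f.coeff ((i : ℕ) + 1 + t)) * X ^ t) :
    ∀ i j : Fin d,
      c i j
        = LinearMap.trace K (AdjoinRoot f)
            (LinearMap.mulLeft K (AdjoinRoot.mk f (H i * H j))) := by
  subst hdeg
  have hf : f ≠ 0 := fun h => hlc (by rw [h, coeff_zero])
  have hH' : ∀ i, H i = hornerPoly f i := hH
  intro i j
  rw [hH', hH', ← AdjoinRoot.repr_mk_coeff_of_bezout_eq_trace hf hc, coeff_sum_fin_C_mul_X_pow,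
    AdjoinRoot.repr_mk_sum_C_mul_X_pow]

/-- the Bezout matrix `B_{f,f'}` equals the matrix of traces of `f`
with respect to the Horner basis. The identity
`f(x)f'(y) − f(y)f'(x) = (x−y)·Σ c_{ij} x^i y^j` is expressed in `K[x][y]`, where
the inner variable is `x` and the outer variable is `y`. -/
theorem statement17 {K : Type*} [Field K] {d : ℕ} (hd : 1 ≤ d)
    (f : Polynomial K) (hdeg : f.natDegree = d) (hlc : f.coeff d ≠ 0)
    (c : Fin d → Fin d → K)
    (hc : C f * (derivative f).map C - f.map C * C (derivative f)
        = (C X - X) *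
          ∑ j : Fin d, C (∑ i : Fin d, C (c i j) * X ^ (i : ℕ)) * X ^ (j : ℕ))
    (H : Fin d → Polynomial K)
    (hH : ∀ i : Fin d,
      H i = ∑ t ∈ Finset.range (d - (i : ℕ)),
        C (f.coeff ((i : ℕ) + 1 + t)) * X ^ t) :
    ∀ i j : Fin d,
      c i j
        = LinearMap.trace K (AdjoinRoot f)
            (LinearMap.mulLeft K (AdjoinRoot.mk f (H i * H j))) :=
  statement17_general f hdeg hlc c hc H hH
end
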